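/- arXiv:2605.18247 — 2 statements merged into one kernel-verified Lean document; each statement's English description precedes it below -/
import Mathlib

section
/- Let Ω ⊆ ℝ³ be open, and let ρ : Ω → ℝ be smooth with ρ > 0 and η : Ω → ℝ smooth with values in (0, π). Set ρ₁ = ρ·cos²(η/2) and ρ₂ = ρ·sin²(η/2). Then Δ√ρ₂/√ρ₂ − Δ√ρ₁/√ρ₁ = ∇·(ρ·∇η)/(ρ·sin η) on Ω. Equivalently, with V_{qi} = −(ħ²/2m)·Δ√ρᵢ/√ρᵢ (ħ, m > 0), one has V_{q2} − V_{q1} = −(ħ²/2m)·∇·(ρ·∇η)/(ρ·sin η). -/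
open Real

noncomputable section

/-- Partial derivative of a scalar function on ℝ³ in the `i`-th coordinate direction. -/
noncomputable def pd (i : Fin 3) (f : (Fin 3 → ℝ) → ℝ) (x : Fin 3 → ℝ) : ℝ :=
  fderiv ℝ f x (Pi.single i 1)

/-- Euclidean Laplacian of a scalar function on ℝ³. -/
noncomputable def lap (f : (Fin 3 → ℝ) → ℝ) (x : Fin 3 → ℝ) : ℝ :=
  ∑ i, pd i (fun y => pd i f y) x

/-- Divergence of a vector field on ℝ³. -/
noncomputable def div3 (v : (Fin 3 → ℝ) → (Fin 3 → ℝ)) (x : Fin 3 → ℝ) : ℝ :=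
  ∑ i, pd i (fun y => v y i) x

/-!
Write `√ρ₁ = u := √ρ cos (η/2)` and `√ρ₂ = v := √ρ sin (η/2)`, valid on `Ω` since both half-angle
factors are positive there. In these polar coordinates `u ∇v - v ∇u = ρ ∇η / 2`, and the divergence
of `u ∇v - v ∇u` is `u Δv - v Δu` because the gradient terms cancel. Dividing by
`u v = ρ sin η / 2` gives `Δv / v - Δu / u`.
-/

open Filter Topology

section PartialDerivatives

variable {i : Fin 3} {f g : (Fin 3 → ℝ) → ℝ} {x : Fin 3 → ℝ}

theorem pd_congr (h : f =ᶠ[𝓝 x] g) : pd i f x = pd i g x := by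
  rw [pd, pd, h.fderiv_eq]

theorem pd_mul (hf : DifferentiableAt ℝ f x) (hg : DifferentiableAt ℝ g x) :
    pd i (fun y => f y * g y) x = f x * pd i g x + g x * pd i f x := by
  simp [pd, fderiv_fun_mul hf hg]

theorem pd_sub (hf : DifferentiableAt ℝ f x) (hg : DifferentiableAt ℝ g x) :
    pd i (fun y => f y - g y) x = pd i f x - pd i g x := by
  simp [pd, fderiv_fun_sub hf hg]

theorem pd_const_mul (c : ℝ) (hf : DifferentiableAt ℝ f x) :
    pd i (fun y => c * f y) x = c * pd i f x := by
  simp [pd, fderiv_const_mul hf]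

theorem pd_div_const (c : ℝ) (hf : DifferentiableAt ℝ f x) :
    pd i (fun y => f y / c) x = pd i f x / c := by
  simp [pd, div_eq_mul_inv, fderiv_mul_const hf, mul_comm]

theorem pd_cos (hf : DifferentiableAt ℝ f x) :
    pd i (fun y => cos (f y)) x = -sin (f x) * pd i f x := by
  simp [pd, fderiv_cos hf]

theorem pd_sin (hf : DifferentiableAt ℝ f x) :
    pd i (fun y => sin (f y)) x = cos (f x) * pd i f x := by
  simp [pd, fderiv_sin hf]

theorem ContDiffAt.differentiableAt_pd (hf : ContDiffAt ℝ 2 f x) :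
    DifferentiableAt ℝ (fun y => pd i f y) x :=
  ((hf.fderiv_right (m := 1) le_rfl).differentiableAt one_ne_zero).clm_apply
    (differentiableAt_const _)

theorem lap_congr (h : f =ᶠ[𝓝 x] g) : lap f x = lap g x := by
  unfold lap
  congr! 1 with i
  exact pd_congr (h.eventuallyEq_nhds.mono fun y hy => pd_congr hy)

end PartialDerivatives

section Divergence

variable {w w' : (Fin 3 → ℝ) → (Fin 3 → ℝ)} {x : Fin 3 → ℝ}

theorem div3_congr (h : w =ᶠ[𝓝 x] w') : div3 w x = div3 w' x := by
  unfold div3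
  congr! 1 with i
  exact pd_congr (h.mono fun y hy => congrFun hy i)

theorem div3_const_mul (c : ℝ) (hw : ∀ i, DifferentiableAt ℝ (fun y => w y i) x) :
    div3 (fun y i => c * w y i) x = c * div3 w x := by
  simp only [div3, pd_const_mul c (hw _), Finset.mul_sum]

end Divergence

section Wronskian

variable {u v : (Fin 3 → ℝ) → ℝ} {x : Fin 3 → ℝ}

theorem pd_wronskian (i : Fin 3) (hu : ContDiffAt ℝ 2 u x) (hv : ContDiffAt ℝ 2 v x) :
    pd i (fun y => u y * pd i v y - v y * pd i u y) x
      = u x * pd i (fun y => pd i v y) x - v x * pd i (fun y => pd i u y) x := by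
  have hu₁ := hu.differentiableAt two_ne_zero
  have hv₁ := hv.differentiableAt two_ne_zero
  rw [pd_sub (hu₁.fun_mul hv.differentiableAt_pd) (hv₁.fun_mul hu.differentiableAt_pd),
    pd_mul hu₁ hv.differentiableAt_pd, pd_mul hv₁ hu.differentiableAt_pd]
  ring

theorem div3_wronskian (hu : ContDiffAt ℝ 2 u x) (hv : ContDiffAt ℝ 2 v x) :
    div3 (fun y i => u y * pd i v y - v y * pd i u y) x = u x * lap v x - v x * lap u x := by
  simp only [div3, lap, pd_wronskian _ hu hv, Finset.sum_sub_distrib, Finset.mul_sum]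

theorem differentiableAt_wronskian (i : Fin 3) (hu : ContDiffAt ℝ 2 u x)
    (hv : ContDiffAt ℝ 2 v x) :
    DifferentiableAt ℝ (fun y => u y * pd i v y - v y * pd i u y) x :=
  ((hu.differentiableAt two_ne_zero).fun_mul hv.differentiableAt_pd).fun_sub
    ((hv.differentiableAt two_ne_zero).fun_mul hu.differentiableAt_pd)

theorem polar_wronskian (i : Fin 3) {r θ : (Fin 3 → ℝ) → ℝ}
    (hr : DifferentiableAt ℝ r x) (hθ : DifferentiableAt ℝ θ x) :
    r x * cos (θ x) * pd i (fun y => r y * sin (θ y)) x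
        - r x * sin (θ x) * pd i (fun y => r y * cos (θ y)) x
      = r x ^ 2 * pd i θ x := by
  rw [pd_mul hr hθ.sin, pd_mul hr hθ.cos, pd_sin hθ, pd_cos hθ]
  linear_combination r x ^ 2 * pd i θ x * sin_sq_add_cos_sq (θ x)

end Wronskian

theorem sin_half_pos_and_cos_half_pos {θ : ℝ} (hθ : θ ∈ Set.Ioo 0 π) :
    0 < sin (θ / 2) ∧ 0 < cos (θ / 2) :=
  ⟨sin_pos_of_pos_of_lt_pi (by linarith [hθ.1]) (by linarith [hθ.2, pi_pos]),
    cos_pos_of_mem_Ioo ⟨by linarith [hθ.1, pi_pos], by linarith [hθ.2]⟩⟩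

theorem mul_pd_eq_two_mul_half_angle_wronskian (i : Fin 3) {ρ η : (Fin 3 → ℝ) → ℝ}
    {y : Fin 3 → ℝ} (hρ : DifferentiableAt ℝ ρ y) (hρpos : 0 < ρ y)
    (hη : DifferentiableAt ℝ η y) :
    ρ y * pd i η y
      = 2 * (√(ρ y) * cos (η y / 2) * pd i (fun z => √(ρ z) * sin (η z / 2)) y
          - √(ρ y) * sin (η y / 2) * pd i (fun z => √(ρ z) * cos (η z / 2)) y) := by
  have hw := polar_wronskian (θ := fun z => η z / 2) i (hρ.sqrt hρpos.ne') (by fun_prop)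
  beta_reduce at hw
  rw [pd_div_const 2 hη, sq_sqrt hρpos.le] at hw
  linear_combination -2 * hw

theorem mul_sin_eq_two_mul_half_angle_prod {a : ℝ} (ha : 0 ≤ a) (θ : ℝ) :
    a * sin θ = 2 * (√a * cos (θ / 2) * (√a * sin (θ / 2))) := by
  have hdouble : sin θ = 2 * sin (θ / 2) * cos (θ / 2) := by
    rw [← sin_two_mul]; ring_nf
  rw [hdouble]
  linear_combination (2 * sin (θ / 2) * cos (θ / 2)) * (sq_sqrt ha).symm

theorem sqrt_mul_cos_half_sq {a θ : ℝ} (ha : 0 ≤ a) (hθ : θ ∈ Set.Ioo 0 π) :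
    √(a * cos (θ / 2) ^ 2) = √a * cos (θ / 2) := by
  rw [sqrt_mul ha, sqrt_sq (sin_half_pos_and_cos_half_pos hθ).2.le]

theorem sqrt_mul_sin_half_sq {a θ : ℝ} (ha : 0 ≤ a) (hθ : θ ∈ Set.Ioo 0 π) :
    √(a * sin (θ / 2) ^ 2) = √a * sin (θ / 2) := by
  rw [sqrt_mul ha, sqrt_sq (sin_half_pos_and_cos_half_pos hθ).1.le]

theorem quantum_potential_difference_general
    (Ω : Set (Fin 3 → ℝ)) (hΩ : IsOpen Ω)
    (ρ η : (Fin 3 → ℝ) → ℝ)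
    (hρ : ContDiffOn ℝ (⊤ : ℕ∞) ρ Ω) (hρpos : ∀ x ∈ Ω, 0 < ρ x)
    (hη : ContDiffOn ℝ (⊤ : ℕ∞) η Ω) (hηval : ∀ x ∈ Ω, η x ∈ Set.Ioo 0 π)
    (hbar m : ℝ)
    (ρ₁ ρ₂ : (Fin 3 → ℝ) → ℝ)
    (hρ₁ : ρ₁ = fun y => ρ y * Real.cos (η y / 2) ^ 2)
    (hρ₂ : ρ₂ = fun y => ρ y * Real.sin (η y / 2) ^ 2) :
    ∀ x ∈ Ω,
      (lap (fun y => Real.sqrt (ρ₂ y)) x / Real.sqrt (ρ₂ x)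
          - lap (fun y => Real.sqrt (ρ₁ y)) x / Real.sqrt (ρ₁ x)
        = div3 (fun y i => ρ y * pd i η y) x / (ρ x * Real.sin (η x))) ∧
      ((-(hbar ^ 2 / (2 * m)) * lap (fun y => Real.sqrt (ρ₂ y)) x / Real.sqrt (ρ₂ x))
          - (-(hbar ^ 2 / (2 * m)) * lap (fun y => Real.sqrt (ρ₁ y)) x / Real.sqrt (ρ₁ x))
        = -(hbar ^ 2 / (2 * m)) * div3 (fun y i => ρ y * pd i η y) x
            / (ρ x * Real.sin (η x))) := by
  intro x hx
  subst hρ₁ hρ₂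
  have hΩx : Ω ∈ 𝓝 x := hΩ.mem_nhds hx
  have hρC : ∀ y ∈ Ω, ContDiffAt ℝ 2 ρ y := fun y hy =>
    (hρ.contDiffAt (hΩ.mem_nhds hy)).of_le (WithTop.coe_le_coe.2 le_top)
  have hηC : ∀ y ∈ Ω, ContDiffAt ℝ 2 η y := fun y hy =>
    (hη.contDiffAt (hΩ.mem_nhds hy)).of_le (WithTop.coe_le_coe.2 le_top)
  set u : (Fin 3 → ℝ) → ℝ := fun y => √(ρ y) * cos (η y / 2)
  set v : (Fin 3 → ℝ) → ℝ := fun y => √(ρ y) * sin (η y / 2)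
  have hu : (fun y => √(ρ y * cos (η y / 2) ^ 2)) =ᶠ[𝓝 x] u :=
    eventually_of_mem hΩx fun y hy => sqrt_mul_cos_half_sq (hρpos y hy).le (hηval y hy)
  have hv : (fun y => √(ρ y * sin (η y / 2) ^ 2)) =ᶠ[𝓝 x] v :=
    eventually_of_mem hΩx fun y hy => sqrt_mul_sin_half_sq (hρpos y hy).le (hηval y hy)
  have huC : ContDiffAt ℝ 2 u x :=
    ((hρC x hx).sqrt (hρpos x hx).ne').mul ((hηC x hx).div_const 2).cos
  have hvC : ContDiffAt ℝ 2 v x :=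
    ((hρC x hx).sqrt (hρpos x hx).ne').mul ((hηC x hx).div_const 2).sin
  have hflux : (fun y i => ρ y * pd i η y)
      =ᶠ[𝓝 x] fun y i => 2 * (u y * pd i v y - v y * pd i u y) :=
    eventually_of_mem hΩx fun y hy => funext fun i =>
      mul_pd_eq_two_mul_half_angle_wronskian i ((hρC y hy).differentiableAt two_ne_zero)
        (hρpos y hy) ((hηC y hy).differentiableAt two_ne_zero)
  have hdiv : div3 (fun y i => ρ y * pd i η y) x = 2 * (u x * lap v x - v x * lap u x) := by
    rw [div3_congr hflux, div3_const_mul 2 fun i => differentiableAt_wronskian i huC hvC,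
      div3_wronskian huC hvC]
  obtain ⟨hs, hc⟩ := sin_half_pos_and_cos_half_pos (hηval x hx)
  have hux : u x ≠ 0 := (mul_pos (sqrt_pos.2 (hρpos x hx)) hc).ne'
  have hvx : v x ≠ 0 := (mul_pos (sqrt_pos.2 (hρpos x hx)) hs).ne'
  have key : lap v x / v x - lap u x / u x
      = div3 (fun y i => ρ y * pd i η y) x / (ρ x * sin (η x)) := by
    have hprod : ρ x * sin (η x) = 2 * (u x * v x) :=
      mul_sin_eq_two_mul_half_angle_prod (hρpos x hx).le (η x)
    rw [hdiv, hprod]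
    field_simp
  simp only [lap_congr hu, lap_congr hv, hu.eq_of_nhds, hv.eq_of_nhds]
  exact ⟨key, by linear_combination (-(hbar ^ 2 / (2 * m))) * key⟩

/-- **Difference of the two quantum potentials.**
With `ρ₁ = ρ cos²(η/2)` and `ρ₂ = ρ sin²(η/2)` one has, on Ω,
`Δ√ρ₂/√ρ₂ - Δ√ρ₁/√ρ₁ = ∇·(ρ∇η)/(ρ sin η)`, and equivalently, with
`V_{qi} = -(ħ²/2m) Δ√ρᵢ/√ρᵢ`,
`V_{q2} - V_{q1} = -(ħ²/2m) ∇·(ρ∇η)/(ρ sin η)`. -/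
theorem quantum_potential_difference
    (Ω : Set (Fin 3 → ℝ)) (hΩ : IsOpen Ω)
    (ρ η : (Fin 3 → ℝ) → ℝ)
    (hρ : ContDiffOn ℝ (⊤ : ℕ∞) ρ Ω) (hρpos : ∀ x ∈ Ω, 0 < ρ x)
    (hη : ContDiffOn ℝ (⊤ : ℕ∞) η Ω) (hηval : ∀ x ∈ Ω, η x ∈ Set.Ioo 0 π)
    (hbar m : ℝ) (hhbar : 0 < hbar) (hm : 0 < m)
    (ρ₁ ρ₂ : (Fin 3 → ℝ) → ℝ)
    (hρ₁ : ρ₁ = fun y => ρ y * Real.cos (η y / 2) ^ 2)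
    (hρ₂ : ρ₂ = fun y => ρ y * Real.sin (η y / 2) ^ 2) :
    ∀ x ∈ Ω,
      (lap (fun y => Real.sqrt (ρ₂ y)) x / Real.sqrt (ρ₂ x)
          - lap (fun y => Real.sqrt (ρ₁ y)) x / Real.sqrt (ρ₁ x)
        = div3 (fun y i => ρ y * pd i η y) x / (ρ x * Real.sin (η x))) ∧
      ((-(hbar ^ 2 / (2 * m)) * lap (fun y => Real.sqrt (ρ₂ y)) x / Real.sqrt (ρ₂ x))
          - (-(hbar ^ 2 / (2 * m)) * lap (fun y => Real.sqrt (ρ₁ y)) x / Real.sqrt (ρ₁ x))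
        = -(hbar ^ 2 / (2 * m)) * div3 (fun y i => ρ y * pd i η y) x
            / (ρ x * Real.sin (η x))) :=
  quantum_potential_difference_general Ω hΩ ρ η hρ hρpos hη hηval hbar m ρ₁ ρ₂ hρ₁ hρ₂

end
end

section
/- Let Ω ⊆ ℝ³ be open, let ρ₁, ρ₂, θ₁, θ₂ : Ω × ℝ → ℝ be smooth with ρ₁, ρ₂ > 0, let A : Ω × ℝ → ℝ³ and B¹, B² : Ω × ℝ → ℝ be smooth, and let m, ħ, q be constants with m, ħ > 0. Set φ = (θ₂ − θ₁)/ħ, ρ = ρ₁ + ρ₂, u = (ρ₁∇θ₁ + ρ₂∇θ₂)/(mρ) − (q/m)A, and let η : Ω × ℝ → (0, π) be the smooth function with ρ₁ = ρ·cos²(η/2) and ρ₂ = ρ·sin²(η/2). Assume ∂ₜρ₁ = −(1/m)·∇·(ρ₁(∇θ₁ − qA)) − (q√(ρ₁ρ₂)/m)·(B¹ sin φ − B² cos φ) and ∂ₜρ₂ = −(1/m)·∇·(ρ₂(∇θ₂ − qA)) + (q√(ρ₁ρ₂)/m)·(B¹ sin φ − B² cos φ). Then ∂ₜη + u·∇η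 = −(ħ/(2mρ·sin η))·∇·(ρ·sin²η·∇φ) + (q/m)·(B¹ sin φ − B² cos φ). -/
/-!
Write `s = sin (η/2)`, `c = cos (η/2)` and `ρ = ρ₁ + ρ₂`. Differentiating `ρ₂ = ρ s²` in any
direction and using `ρ = ρ₁ + ρ₂` and `s² + c² = 1` gives `ρ s c ∂η = c² ∂ρ₂ - s² ∂ρ₁`, in space
and in time alike. In time, the two continuity equations turn the right-hand side into
`-(c² ∇·J₂ - s² ∇·J₁)/m` plus the source terms, which add up to `q/m (B¹ sin φ - B² cos φ) ρ s c`
because `√(ρ₁ρ₂) = ρ s c`. Expanding the divergences by the product rule and eliminating `∇η` in the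
same way, the flux part is a pointwise identity:
`c² ∇·J₂ - s² ∇·J₁ - s c (m ρ u)·∇η = ¼ ∇·(ρ sin²η ∇(θ₂ - θ₁))`, where `Jₖ = ρₖ (∇θₖ - qA)`.
-/

open Real

noncomputable section

/-- Space-time point: a point of ℝ³ together with a time. -/
abbrev P3 := (Fin 3 → ℝ) × ℝ

/-- Spatial partial derivative in the `i`-th coordinate direction. -/
noncomputable def pdx (i : Fin 3) (f : P3 → ℝ) (p : P3) : ℝ :=
  fderiv ℝ (fun x => f (x, p.2)) p.1 (Pi.single i 1)

/-- Time derivative. -/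
noncomputable def pdt (f : P3 → ℝ) (p : P3) : ℝ :=
  deriv (fun t => f (p.1, t)) p.2

/-- Spatial divergence of a time-dependent vector field. -/
noncomputable def divx (v : P3 → Fin 3 → ℝ) (p : P3) : ℝ :=
  ∑ i, pdx i (fun y => v y i) p

open Filter Topology

lemma pdx_eq_fderiv {f : P3 → ℝ} {p : P3} (hf : DifferentiableAt ℝ f p) (i : Fin 3) :
    pdx i f p = fderiv ℝ f p (Pi.single i 1, 0) := by
  have hslice : HasFDerivAt (fun x => ((x, p.2) : P3)) ((ContinuousLinearMap.id ℝ _).prod 0) p.1 :=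
    (hasFDerivAt_id p.1).prodMk (hasFDerivAt_const p.2 p.1)
  have h : HasFDerivAt (fun x => f (x, p.2)) _ p.1 :=
    (hf.hasFDerivAt : HasFDerivAt f _ (p.1, p.2)).comp p.1 hslice
  rw [pdx, h.fderiv]
  simp

lemma pdt_eq_fderiv {f : P3 → ℝ} {p : P3} (hf : DifferentiableAt ℝ f p) :
    pdt f p = fderiv ℝ f p (0, 1) := by
  have hslice : HasDerivAt (fun t => ((p.1, t) : P3)) (0, 1) p.2 :=
    (hasDerivAt_const p.2 p.1).prodMk (hasDerivAt_id p.2)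
  have h : HasDerivAt (fun t => f (p.1, t)) _ p.2 :=
    (hf.hasFDerivAt : HasFDerivAt f _ (p.1, p.2)).comp_hasDerivAt p.2 hslice
  rw [pdt, h.deriv]

lemma Filter.EventuallyEq.pdx_eq {f g : P3 → ℝ} {p : P3} (h : f =ᶠ[𝓝 p] g) (i : Fin 3) :
    pdx i f p = pdx i g p := by
  have hslice : Tendsto (fun x => ((x, p.2) : P3)) (𝓝 p.1) (𝓝 p) :=
    (continuous_id.prodMk continuous_const).tendsto' p.1 p rfl
  have h' : (fun x => f (x, p.2)) =ᶠ[𝓝 p.1] fun x => g (x, p.2) := h.comp_tendsto hslice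
  rw [pdx, pdx, h'.fderiv_eq]

lemma Filter.EventuallyEq.divx_eq {v w : P3 → Fin 3 → ℝ} {p : P3} (h : v =ᶠ[𝓝 p] w) :
    divx v p = divx w p :=
  Finset.sum_congr rfl fun i _ => Filter.EventuallyEq.pdx_eq (h.mono fun _ hy => congrFun hy i) i

lemma pdx_div_const (f : P3 → ℝ) (c : ℝ) (i : Fin 3) (p : P3) :
    pdx i (fun y => f y / c) p = pdx i f p / c := by
  simp only [pdx, div_eq_inv_mul]
  rw [show (fun x => c⁻¹ * f (x, p.2)) = c⁻¹ • fun x => f (x, p.2) from rfl,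
    fderiv_const_smul_field]
  rfl

lemma divx_div_const (v : P3 → Fin 3 → ℝ) (c : ℝ) (p : P3) :
    divx (fun y i => v y i / c) p = divx v p / c := by
  simp only [divx, pdx_div_const, Finset.sum_div]

lemma ContDiffAt.pdx {n : WithTop ℕ∞} {f : P3 → ℝ} {p : P3} (hf : ContDiffAt ℝ (n + 1) f p)
    (i : Fin 3) : ContDiffAt ℝ n (pdx i f) p := by
  refine ((hf.fderiv_right le_rfl).clm_apply
    (contDiffAt_const (c := ((Pi.single i 1 : Fin 3 → ℝ), (0 : ℝ))))).congr_of_eventuallyEq ?_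
  filter_upwards [(hf.of_le le_add_self).eventually (by simp)] with y hy
  exact pdx_eq_fderiv (hy.differentiableAt (by simp)) i

section Leibniz

variable {f g : P3 → ℝ} {p : P3}

lemma pdx_add (hf : DifferentiableAt ℝ f p) (hg : DifferentiableAt ℝ g p) (i : Fin 3) :
    pdx i (fun y => f y + g y) p = pdx i f p + pdx i g p := by
  rw [pdx_eq_fderiv (hf.fun_add hg), pdx_eq_fderiv hf, pdx_eq_fderiv hg, fderiv_fun_add hf hg]
  rfl

lemma pdx_sub (hf : DifferentiableAt ℝ f p) (hg : DifferentiableAt ℝ g p) (i : Fin 3) :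
    pdx i (fun y => f y - g y) p = pdx i f p - pdx i g p := by
  rw [pdx_eq_fderiv (hf.fun_sub hg), pdx_eq_fderiv hf, pdx_eq_fderiv hg, fderiv_fun_sub hf hg]
  rfl

lemma pdx_mul (hf : DifferentiableAt ℝ f p) (hg : DifferentiableAt ℝ g p) (i : Fin 3) :
    pdx i (fun y => f y * g y) p = pdx i f p * g p + f p * pdx i g p := by
  rw [pdx_eq_fderiv (hf.fun_mul hg), pdx_eq_fderiv hf, pdx_eq_fderiv hg, fderiv_fun_mul hf hg]
  simp only [add_apply, smul_apply, smul_eq_mul]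
  ring

lemma pdx_const_mul (c : ℝ) (hf : DifferentiableAt ℝ f p) (i : Fin 3) :
    pdx i (fun y => c * f y) p = c * pdx i f p := by
  rw [pdx_eq_fderiv (hf.const_mul c), pdx_eq_fderiv hf, fderiv_const_mul hf c]
  rfl

lemma pdx_comp {h : ℝ → ℝ} {h' : ℝ} (hh : HasDerivAt h h' (f p)) (hf : DifferentiableAt ℝ f p)
    (i : Fin 3) : pdx i (fun y => h (f y)) p = h' * pdx i f p := by
  have hcomp : HasFDerivAt (fun y => h (f y)) _ p := hh.comp_hasFDerivAt p hf.hasFDerivAt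
  rw [pdx_eq_fderiv hcomp.differentiableAt, hcomp.fderiv, pdx_eq_fderiv hf]
  rfl

lemma divx_mul {w : P3 → Fin 3 → ℝ} (hf : DifferentiableAt ℝ f p)
    (hw : ∀ i, DifferentiableAt ℝ (fun y => w y i) p) :
    divx (fun y i => f y * w y i) p
      = ∑ i, (pdx i f p * w p i + f p * pdx i (fun y => w y i) p) :=
  Finset.sum_congr rfl fun i _ => pdx_mul hf (hw i) i

end Leibniz

lemma divx_mul_pdx_sub_div {w θ₁ θ₂ : P3 → ℝ} {p : P3} (c : ℝ)
    (hθ₁ : ∀ᶠ y in 𝓝 p, DifferentiableAt ℝ θ₁ y) (hθ₂ : ∀ᶠ y in 𝓝 p, DifferentiableAt ℝ θ₂ y) :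
    divx (fun y i => w y * pdx i (fun y => (θ₂ y - θ₁ y) / c) y) p
      = divx (fun y i => w y * (pdx i θ₂ y - pdx i θ₁ y)) p / c := by
  simp only [pdx_div_const, ← mul_div_assoc]
  rw [divx_div_const]
  congr 1
  refine Filter.EventuallyEq.divx_eq ?_
  filter_upwards [hθ₁, hθ₂] with y hy₁ hy₂
  funext i
  rw [pdx_sub hy₂ hy₁]

lemma divx_mul_covariant_grad {r θ : P3 → ℝ} {A : P3 → Fin 3 → ℝ} {p : P3} (q : ℝ)
    (hr : DifferentiableAt ℝ r p) (hθ : ContDiffAt ℝ 2 θ p)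
    (hA : ∀ i, DifferentiableAt ℝ (fun y => A y i) p) :
    divx (fun y i => r y * (pdx i θ y - q * A y i)) p
      = ∑ i, (pdx i r p * (pdx i θ p - q * A p i)
          + r p * (pdx i (pdx i θ) p - q * pdx i (fun y => A y i) p)) := by
  have hgrad i : DifferentiableAt ℝ (pdx i θ) p := (hθ.pdx i).differentiableAt one_ne_zero
  rw [divx_mul hr fun i => (hgrad i).fun_sub ((hA i).const_mul q)]
  refine Finset.sum_congr rfl fun i _ => ?_
  rw [pdx_sub (hgrad i) ((hA i).const_mul q), pdx_const_mul q (hA i)]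

lemma sin_eq_two_mul_sin_half_mul_cos_half (x : ℝ) : sin x = 2 * sin (x / 2) * cos (x / 2) := by
  rw [← sin_two_mul]; ring_nf

lemma cos_eq_cos_half_sq_sub_sin_half_sq (x : ℝ) :
    cos x = cos (x / 2) ^ 2 - sin (x / 2) ^ 2 := by
  rw [← cos_two_mul']; ring_nf

lemma hasDerivAt_sin_half_sq (x : ℝ) :
    HasDerivAt (fun x => sin (x / 2) ^ 2) (sin (x / 2) * cos (x / 2)) x := by
  refine (((hasDerivAt_id x).div_const 2).sin.fun_pow 2).congr_deriv ?_
  simp only [id]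
  ring

section PolarAngle

variable {r₁ r₂ x : ℝ}

lemma eq_mul_cos_half_sq_of_eq_mul_sin_half_sq (h : r₂ = (r₁ + r₂) * sin (x / 2) ^ 2) :
    r₁ = (r₁ + r₂) * cos (x / 2) ^ 2 := by
  linear_combination -h - (r₁ + r₂) * sin_sq_add_cos_sq (x / 2)

lemma sqrt_mul_eq_of_eq_mul_sin_half_sq (h : r₂ = (r₁ + r₂) * sin (x / 2) ^ 2)
    (hr : 0 ≤ r₁ + r₂) (hs : 0 ≤ sin (x / 2)) (hc : 0 ≤ cos (x / 2)) :
    √(r₁ * r₂) = (r₁ + r₂) * (sin (x / 2) * cos (x / 2)) := by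
  rw [← Real.sqrt_sq (by positivity : 0 ≤ (r₁ + r₂) * (sin (x / 2) * cos (x / 2)))]
  congr 1
  linear_combination
    r₁ * h + (r₁ + r₂) * sin (x / 2) ^ 2 * eq_mul_cos_half_sq_of_eq_mul_sin_half_sq h

end PolarAngle

lemma fderiv_polar_angle {E : Type*} [NormedAddCommGroup E] [NormedSpace ℝ E]
    {ρ₁ ρ₂ η : E → ℝ} {p : E} (hρ₁ : DifferentiableAt ℝ ρ₁ p) (hρ₂ : DifferentiableAt ℝ ρ₂ p)
    (hη : DifferentiableAt ℝ η p)
    (hρ₂η : ρ₂ =ᶠ[𝓝 p] fun y => (ρ₁ y + ρ₂ y) * sin (η y / 2) ^ 2) (v : E) :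
    (ρ₁ p + ρ₂ p) * (sin (η p / 2) * cos (η p / 2)) * fderiv ℝ η p v
      = cos (η p / 2) ^ 2 * fderiv ℝ ρ₂ p v - sin (η p / 2) ^ 2 * fderiv ℝ ρ₁ p v := by
  have hpolar := (hρ₁.hasFDerivAt.add hρ₂.hasFDerivAt).mul
    ((hasDerivAt_sin_half_sq (η p)).comp_hasFDerivAt p hη.hasFDerivAt)
  have h := congrArg (· v) (hρ₂η.fderiv_eq.trans hpolar.fderiv)
  simp only [add_apply, smul_apply, smul_eq_mul, Pi.add_apply, Function.comp_apply] at h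
  linear_combination -h - fderiv ℝ ρ₂ p v * sin_sq_add_cos_sq (η p / 2)

lemma polar_flux_identity {ρ₁ ρ₂ η θ₁ θ₂ : P3 → ℝ} {A : P3 → Fin 3 → ℝ} {p : P3} (q : ℝ)
    (hρ₁ : DifferentiableAt ℝ ρ₁ p) (hρ₂ : DifferentiableAt ℝ ρ₂ p) (hη : DifferentiableAt ℝ η p)
    (hθ₁ : ContDiffAt ℝ 2 θ₁ p) (hθ₂ : ContDiffAt ℝ 2 θ₂ p)
    (hA : ∀ i, DifferentiableAt ℝ (fun y => A y i) p)
    (hρ₂η : ρ₂ =ᶠ[𝓝 p] fun y => (ρ₁ y + ρ₂ y) * sin (η y / 2) ^ 2) :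
    cos (η p / 2) ^ 2 * divx (fun y i => ρ₂ y * (pdx i θ₂ y - q * A y i)) p
      - sin (η p / 2) ^ 2 * divx (fun y i => ρ₁ y * (pdx i θ₁ y - q * A y i)) p
      - sin (η p / 2) * cos (η p / 2)
        * ∑ i, (ρ₁ p * pdx i θ₁ p + ρ₂ p * pdx i θ₂ p - q * (ρ₁ p + ρ₂ p) * A p i) * pdx i η p
    = divx (fun y i => (ρ₁ y + ρ₂ y) * sin (η y) ^ 2 * (pdx i θ₂ y - pdx i θ₁ y)) p / 4 := by
  have hgrad₁ i : DifferentiableAt ℝ (pdx i θ₁) p := (hθ₁.pdx i).differentiableAt one_ne_zero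
  have hgrad₂ i : DifferentiableAt ℝ (pdx i θ₂) p := (hθ₂.pdx i).differentiableAt one_ne_zero
  have hη_grad i := fderiv_polar_angle hρ₁ hρ₂ hη hρ₂η (Pi.single i 1, 0)
  simp only [← pdx_eq_fderiv hρ₁, ← pdx_eq_fderiv hρ₂, ← pdx_eq_fderiv hη] at hη_grad
  have hsin_sq : HasDerivAt (fun x => sin x ^ 2) (2 * sin (η p) * cos (η p)) (η p) := by
    simpa using (hasDerivAt_sin (η p)).fun_pow 2
  have hw := (hρ₁.fun_add hρ₂).fun_mul (hη.sin.fun_pow 2)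
  rw [divx_mul_covariant_grad q hρ₂ hθ₂ hA, divx_mul_covariant_grad q hρ₁ hθ₁ hA,
    divx_mul hw fun i => (hgrad₂ i).fun_sub (hgrad₁ i), Finset.mul_sum, Finset.mul_sum,
    Finset.mul_sum, ← Finset.sum_sub_distrib, ← Finset.sum_sub_distrib, Finset.sum_div]
  refine Finset.sum_congr rfl fun i _ => ?_
  rw [pdx_mul (hρ₁.fun_add hρ₂) (hη.sin.fun_pow 2), pdx_add hρ₁ hρ₂, pdx_comp hsin_sq hη,
    pdx_sub (hgrad₂ i) (hgrad₁ i), sin_eq_two_mul_sin_half_mul_cos_half (η p),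
    cos_eq_cos_half_sq_sub_sin_half_sq (η p)]
  have hρ₂p : ρ₂ p = (ρ₁ p + ρ₂ p) * sin (η p / 2) ^ 2 := hρ₂η.eq_of_nhds
  have hρ₁p := eq_mul_cos_half_sq_of_eq_mul_sin_half_sq hρ₂p
  set R := ρ₁ p + ρ₂ p
  set s := sin (η p / 2)
  set c := cos (η p / 2)
  rw [hρ₁p, hρ₂p]
  -- `hη_grad i` eliminates `∂ᵢη`; what is left vanishes modulo `s ^ 2 + c ^ 2 = 1`.
  linear_combination (-(c ^ 2 * pdx i θ₁ p + s ^ 2 * pdx i θ₂ p - q * A p i)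
      - (c ^ 2 - s ^ 2) * (pdx i θ₂ p - pdx i θ₁ p)) * hη_grad i
    + (s ^ 2 * pdx i ρ₁ p * pdx i θ₁ p - c ^ 2 * pdx i ρ₂ p * pdx i θ₂ p)
      * sin_sq_add_cos_sq (η p / 2)

lemma sum_div_sub_mul_mul {ι : Type*} (S : Finset ι) (a b e : ι → ℝ) (m q : ℝ) {R : ℝ}
    (hR : R ≠ 0) :
    ∑ i ∈ S, (a i / (m * R) - q / m * b i) * e i
      = (∑ i ∈ S, (a i - q * R * b i) * e i) / (m * R) := by
  rw [Finset.sum_div]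
  refine Finset.sum_congr rfl fun i _ => ?_
  field_simp

lemma polar_angle_evolution_of_flux_identity {m ħ q R s c G dtη D₁ D₂ N Div : ℝ} (hm : m ≠ 0)
    (hħ : ħ ≠ 0) (hR : R ≠ 0) (hs : s ≠ 0) (hc : c ≠ 0) (hpyth : s ^ 2 + c ^ 2 = 1)
    (hdt : R * (s * c) * dtη = c ^ 2 * (-(1 / m) * D₂ + q * (R * (s * c)) / m * G)
      - s ^ 2 * (-(1 / m) * D₁ - q * (R * (s * c)) / m * G))
    (hflux : c ^ 2 * D₂ - s ^ 2 * D₁ - s * c * N = Div / 4) :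
    dtη + N / (m * R) = -(ħ / (2 * m * R * (2 * s * c))) * (Div / ħ) + q / m * G := by
  field_simp
  -- `hdt` still carries `1 / m`, which `ring` alone cannot cancel.
  linear_combination (norm := skip) 4 * m * hdt - 4 * hflux + 4 * q * R * s * c * G * hpyth
  field_simp
  ring

theorem eta_evolution_general
    (Ω : Set (Fin 3 → ℝ)) (hΩ : IsOpen Ω)
    (ρ₁ ρ₂ θ₁ θ₂ : P3 → ℝ) (A : P3 → Fin 3 → ℝ) (B1 B2 : P3 → ℝ)
    (m hbar q : ℝ) (hm : 0 < m) (hhbar : 0 < hbar)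
    (hρ₁s : ContDiffOn ℝ (⊤ : ℕ∞) ρ₁ (Ω ×ˢ Set.univ))
    (hρ₂s : ContDiffOn ℝ (⊤ : ℕ∞) ρ₂ (Ω ×ˢ Set.univ))
    (hθ₁s : ContDiffOn ℝ (⊤ : ℕ∞) θ₁ (Ω ×ˢ Set.univ))
    (hθ₂s : ContDiffOn ℝ (⊤ : ℕ∞) θ₂ (Ω ×ˢ Set.univ))
    (hAs : ContDiffOn ℝ (⊤ : ℕ∞) A (Ω ×ˢ Set.univ))
    (hρ₁pos : ∀ p ∈ Ω ×ˢ (Set.univ : Set ℝ), 0 < ρ₁ p)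
    (hρ₂pos : ∀ p ∈ Ω ×ˢ (Set.univ : Set ℝ), 0 < ρ₂ p)
    (φ : P3 → ℝ) (hφ : φ = fun p => (θ₂ p - θ₁ p) / hbar)
    (ρ : P3 → ℝ) (hρ : ρ = fun p => ρ₁ p + ρ₂ p)
    (u : P3 → Fin 3 → ℝ)
    (hu : u = fun p i =>
      (ρ₁ p * pdx i θ₁ p + ρ₂ p * pdx i θ₂ p) / (m * ρ p) - q / m * A p i)
    (η : P3 → ℝ)
    (hηs : ContDiffOn ℝ (⊤ : ℕ∞) η (Ω ×ˢ Set.univ))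
    (hηval : ∀ p ∈ Ω ×ˢ (Set.univ : Set ℝ), η p ∈ Set.Ioo 0 π)
    (hη₂ : ∀ p ∈ Ω ×ˢ (Set.univ : Set ℝ), ρ₂ p = ρ p * Real.sin (η p / 2) ^ 2)
    (h1 : ∀ p ∈ Ω ×ˢ (Set.univ : Set ℝ),
      pdt ρ₁ p = -(1 / m) * divx (fun y i => ρ₁ y * (pdx i θ₁ y - q * A y i)) p
        - q * Real.sqrt (ρ₁ p * ρ₂ p) / m
          * (B1 p * Real.sin (φ p) - B2 p * Real.cos (φ p)))
    (h2 : ∀ p ∈ Ω ×ˢ (Set.univ : Set ℝ),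
      pdt ρ₂ p = -(1 / m) * divx (fun y i => ρ₂ y * (pdx i θ₂ y - q * A y i)) p
        + q * Real.sqrt (ρ₁ p * ρ₂ p) / m
          * (B1 p * Real.sin (φ p) - B2 p * Real.cos (φ p))) :
    ∀ p ∈ Ω ×ˢ (Set.univ : Set ℝ),
      pdt η p + (∑ i, u p i * pdx i η p)
        = -(hbar / (2 * m * ρ p * Real.sin (η p)))
            * divx (fun y i => ρ y * Real.sin (η y) ^ 2 * pdx i φ y) p
          + q / m * (B1 p * Real.sin (φ p) - B2 p * Real.cos (φ p)) := by
  subst hφ hρ hu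
  intro p hp
  have hU : Ω ×ˢ Set.univ ∈ 𝓝 p := (hΩ.prod isOpen_univ).mem_nhds hp
  have hC2 {f : P3 → ℝ} (hf : ContDiffOn ℝ (⊤ : ℕ∞) f (Ω ×ˢ Set.univ)) : ContDiffAt ℝ 2 f p :=
    (hf.contDiffAt hU).of_le (WithTop.coe_le_coe.2 le_top)
  have hρ₁ := (hC2 hρ₁s).differentiableAt two_ne_zero
  have hρ₂ := (hC2 hρ₂s).differentiableAt two_ne_zero
  have hη := (hC2 hηs).differentiableAt two_ne_zero
  have hA i : DifferentiableAt ℝ (fun y => A y i) p :=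
    differentiableAt_pi.1 ((hAs.contDiffAt hU).differentiableAt (by simp)) i
  have hρ₂η : ρ₂ =ᶠ[𝓝 p] fun y => (ρ₁ y + ρ₂ y) * sin (η y / 2) ^ 2 := eventually_of_mem hU hη₂
  obtain ⟨hη0, hηπ⟩ := hηval p hp
  have hs : 0 < sin (η p / 2) := sin_pos_of_pos_of_lt_pi (by linarith) (by linarith)
  have hc : 0 < cos (η p / 2) := cos_pos_of_mem_Ioo ⟨by linarith, by linarith⟩
  have hR : 0 < ρ₁ p + ρ₂ p := add_pos (hρ₁pos p hp) (hρ₂pos p hp)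
  have hdt_η := fderiv_polar_angle hρ₁ hρ₂ hη hρ₂η (0, 1)
  rw [← pdt_eq_fderiv hρ₁, ← pdt_eq_fderiv hρ₂, ← pdt_eq_fderiv hη, h1 p hp, h2 p hp,
    sqrt_mul_eq_of_eq_mul_sin_half_sq hρ₂η.eq_of_nhds hR.le hs.le hc.le] at hdt_η
  beta_reduce at hdt_η ⊢
  rw [sum_div_sub_mul_mul _ _ _ _ m q hR.ne', sin_eq_two_mul_sin_half_mul_cos_half,
    divx_mul_pdx_sub_div hbar ((hθ₁s.differentiableOn (by simp)).eventually_differentiableAt hU)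
      ((hθ₂s.differentiableOn (by simp)).eventually_differentiableAt hU)]
  exact polar_angle_evolution_of_flux_identity hm.ne' hhbar.ne' hR.ne' hs.ne' hc.ne'
    (sin_sq_add_cos_sq _) hdt_η (polar_flux_identity q hρ₁ hρ₂ hη (hC2 hθ₁s) (hC2 hθ₂s) hA hρ₂η)

/-- **Evolution equation for the polar spin angle η.**
From the imaginary parts of the Pauli equation for the polar components
`Ψᵢ = √ρᵢ e^{iθᵢ/ħ}`, the polar spin angle `η` (with `ρ₁ = ρ cos²(η/2)`,
`ρ₂ = ρ sin²(η/2)`) satisfies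
`∂ₜη + u·∇η = -(ħ/(2mρ sin η)) ∇·(ρ sin²η ∇φ) + (q/m)(B¹ sin φ - B² cos φ)`. -/
theorem eta_evolution
    (Ω : Set (Fin 3 → ℝ)) (hΩ : IsOpen Ω)
    (ρ₁ ρ₂ θ₁ θ₂ : P3 → ℝ) (A : P3 → Fin 3 → ℝ) (B1 B2 : P3 → ℝ)
    (m hbar q : ℝ) (hm : 0 < m) (hhbar : 0 < hbar)
    (hρ₁s : ContDiffOn ℝ (⊤ : ℕ∞) ρ₁ (Ω ×ˢ Set.univ))
    (hρ₂s : ContDiffOn ℝ (⊤ : ℕ∞) ρ₂ (Ω ×ˢ Set.univ))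
    (hθ₁s : ContDiffOn ℝ (⊤ : ℕ∞) θ₁ (Ω ×ˢ Set.univ))
    (hθ₂s : ContDiffOn ℝ (⊤ : ℕ∞) θ₂ (Ω ×ˢ Set.univ))
    (hAs : ContDiffOn ℝ (⊤ : ℕ∞) A (Ω ×ˢ Set.univ))
    (hB1s : ContDiffOn ℝ (⊤ : ℕ∞) B1 (Ω ×ˢ Set.univ))
    (hB2s : ContDiffOn ℝ (⊤ : ℕ∞) B2 (Ω ×ˢ Set.univ))
    (hρ₁pos : ∀ p ∈ Ω ×ˢ (Set.univ : Set ℝ), 0 < ρ₁ p)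
    (hρ₂pos : ∀ p ∈ Ω ×ˢ (Set.univ : Set ℝ), 0 < ρ₂ p)
    (φ : P3 → ℝ) (hφ : φ = fun p => (θ₂ p - θ₁ p) / hbar)
    (ρ : P3 → ℝ) (hρ : ρ = fun p => ρ₁ p + ρ₂ p)
    (u : P3 → Fin 3 → ℝ)
    (hu : u = fun p i =>
      (ρ₁ p * pdx i θ₁ p + ρ₂ p * pdx i θ₂ p) / (m * ρ p) - q / m * A p i)
    (η : P3 → ℝ)
    (hηs : ContDiffOn ℝ (⊤ : ℕ∞) η (Ω ×ˢ Set.univ))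
    (hηval : ∀ p ∈ Ω ×ˢ (Set.univ : Set ℝ), η p ∈ Set.Ioo 0 π)
    (hη₁ : ∀ p ∈ Ω ×ˢ (Set.univ : Set ℝ), ρ₁ p = ρ p * Real.cos (η p / 2) ^ 2)
    (hη₂ : ∀ p ∈ Ω ×ˢ (Set.univ : Set ℝ), ρ₂ p = ρ p * Real.sin (η p / 2) ^ 2)
    (h1 : ∀ p ∈ Ω ×ˢ (Set.univ : Set ℝ),
      pdt ρ₁ p = -(1 / m) * divx (fun y i => ρ₁ y * (pdx i θ₁ y - q * A y i)) p
        - q * Real.sqrt (ρ₁ p * ρ₂ p) / m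
          * (B1 p * Real.sin (φ p) - B2 p * Real.cos (φ p)))
    (h2 : ∀ p ∈ Ω ×ˢ (Set.univ : Set ℝ),
      pdt ρ₂ p = -(1 / m) * divx (fun y i => ρ₂ y * (pdx i θ₂ y - q * A y i)) p
        + q * Real.sqrt (ρ₁ p * ρ₂ p) / m
          * (B1 p * Real.sin (φ p) - B2 p * Real.cos (φ p))) :
    ∀ p ∈ Ω ×ˢ (Set.univ : Set ℝ),
      pdt η p + (∑ i, u p i * pdx i η p)
        = -(hbar / (2 * m * ρ p * Real.sin (η p)))
            * divx (fun y i => ρ y * Real.sin (η y) ^ 2 * pdx i φ y) p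
          + q / m * (B1 p * Real.sin (φ p) - B2 p * Real.cos (φ p)) :=
  eta_evolution_general Ω hΩ ρ₁ ρ₂ θ₁ θ₂ A B1 B2 m hbar q hm hhbar hρ₁s hρ₂s hθ₁s hθ₂s hAs hρ₁pos
    hρ₂pos φ hφ ρ hρ u hu η hηs hηval hη₂ h1 h2

end
end
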